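/- Let k, n ∈ ℕ, C_x, C_y > 0, r > 0, and set C := max{1, C_x}. Suppose x_j^{(i)} > 0 and 0 < y_α < C_y (|α|+1)! / r^{|α|+1} for all multi-indices α ∈ ℕ₀ⁿ with |α| ≤ k, i ∈ {1,…,k}, j ∈ {1,…,n}. Then p_k^{(n)}({y_α}, {C_x x_j^{(i)}}) ≤ C_y · p_k^{(n)}({(|α|+1)!/(r/C)^{|α|+1}}, {x_j^{(i)}}), where p_k^{(n)} is the universal Faà di Bruno polynomial. -/
import Mathlib


/-- The coefficient `k!/(∏ᵢ (i!)^{rᵢ} ∏ᵢⱼ qᵢⱼ!)` of the multivariate Faà di Bruno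
formula, where `rᵢ = ∑ⱼ qᵢⱼ`. -/
noncomputable def FdBcoeff (k n : ℕ) (q : Fin k → Fin n → ℕ) : ℝ :=
  (Nat.factorial k : ℝ) /
    ((∏ i : Fin k, ((Nat.factorial (i.1 + 1) : ℝ)) ^ (∑ j, q i j)) *
      ∏ i : Fin k, ∏ j : Fin n, (Nat.factorial (q i j) : ℝ))

/-- The universal polynomial `p_k^{(n)}` of the multivariate Faà di Bruno formula:
`p_k^{(n)}({y_α},{x_j^{(i)}}) = Σ k!/(∏(i!)^{rᵢ} ∏ qᵢⱼ!) · y_α ∏ᵢⱼ (x_j^{(i)})^{qᵢⱼ}`,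
summed over non-negative integer solutions of `r₁+2r₂+…+kr_k = k`, `qᵢ₁+…+qᵢₙ = rᵢ`,
with `αⱼ = Σᵢ qᵢⱼ`.  (All `qᵢⱼ ≤ k`, so the sum over `qᵢⱼ ∈ {0,…,k}` is exhaustive.) -/
noncomputable def pFdB {R : Type*} [CommRing R] [Module ℝ R] (k n : ℕ)
    (y : (Fin n → ℕ) → R) (x : Fin k → Fin n → R) : R :=
  ∑ q : Fin k → Fin n → Fin (k + 1),
    if ∑ i : Fin k, (i.1 + 1) * (∑ j, (q i j).1) = k then
      FdBcoeff k n (fun i j => (q i j).1) •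
        (y (fun j => ∑ i, (q i j).1) * ∏ i, ∏ j, x i j ^ (q i j).1)
    else 0

/-- With `C := max{1, C_x}`, if `0 < x_j^{(i)}` and
`0 < y_α < C_y (|α|+1)!/r^{|α|+1}` for `|α| ≤ k`, then
`p_k^{(n)}({y_α},{C_x x_j^{(i)}}) ≤ C_y p_k^{(n)}({(|α|+1)!/(r/C)^{|α|+1}},{x_j^{(i)}})`. -/
theorem stmt15 (k n : ℕ) (Cx Cy r : ℝ) (hCx : 0 < Cx) (hCy : 0 < Cy) (hr : 0 < r)
    (x : Fin k → Fin n → ℝ) (y : (Fin n → ℕ) → ℝ)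
    (hx : ∀ i j, 0 < x i j)
    (hy : ∀ α : Fin n → ℕ, (∑ j, α j) ≤ k →
      0 < y α ∧ y α < Cy * (Nat.factorial ((∑ j, α j) + 1) : ℝ) / r ^ ((∑ j, α j) + 1)) :
    pFdB k n y (fun i j => Cx * x i j) ≤
      Cy * pFdB k n
        (fun α => (Nat.factorial ((∑ j, α j) + 1) : ℝ) /
          (r / max 1 Cx) ^ ((∑ j, α j) + 1)) x := by
  rw [pFdB, pFdB, Finset.mul_sum]
  apply Finset.sum_le_sum
  intro q _
  split_ifs with h
  · have hC1 : (1:ℝ) ≤ max 1 Cx := le_max_left _ _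
    have hCpos : (0:ℝ) < max 1 Cx := lt_of_lt_of_le one_pos hC1
    have hCxC : Cx ≤ max 1 Cx := le_max_right _ _
    set m := ∑ j, ∑ i : Fin k, (q i j).1 with hm
    have hS : (∑ i : Fin k, ∑ j, (q i j).1) = m := by rw [hm, Finset.sum_comm]
    have hmk : m ≤ k := by
      rw [← hS]
      calc ∑ i : Fin k, ∑ j, (q i j).1
          ≤ ∑ i : Fin k, (i.1 + 1) * ∑ j, (q i j).1 := by
            apply Finset.sum_le_sum; intro i _
            exact Nat.le_mul_of_pos_left _ (Nat.succ_pos _)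
        _ = k := h
    obtain ⟨hy0, hy1⟩ := hy (fun j => ∑ i, (q i j).1) hmk
    have hcoeff : 0 ≤ FdBcoeff k n (fun i j => (q i j).1) := by
      unfold FdBcoeff; positivity
    have hP : 0 < ∏ i : Fin k, ∏ j, x i j ^ (q i j).1 := by
      apply Finset.prod_pos; intro i _
      apply Finset.prod_pos; intro j _
      exact pow_pos (hx i j) _
    have hprod : (∏ i : Fin k, ∏ j, (Cx * x i j) ^ (q i j).1)
        = Cx ^ m * ∏ i : Fin k, ∏ j, x i j ^ (q i j).1 := by
      rw [← hS]
      simp_rw [mul_pow, Finset.prod_mul_distrib, Finset.prod_pow_eq_pow_sum]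
    have key : y (fun j => ∑ i, (q i j).1) * Cx ^ m
        ≤ Cy * ((Nat.factorial (m + 1) : ℝ) / (r / max 1 Cx) ^ (m + 1)) := by
      have h1 : Cx ^ m ≤ (max 1 Cx) ^ (m + 1) := by
        calc Cx ^ m ≤ (max 1 Cx) ^ m := pow_le_pow_left₀ hCx.le hCxC m
          _ ≤ (max 1 Cx) ^ (m + 1) := pow_le_pow_right₀ hC1 (Nat.le_succ m)
      have h2 : (r / max 1 Cx) ^ (m + 1) = r ^ (m + 1) / (max 1 Cx) ^ (m + 1) :=
        div_pow r _ _
      rw [h2, div_div_eq_mul_div]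
      calc y (fun j => ∑ i, (q i j).1) * Cx ^ m
          ≤ (Cy * (Nat.factorial (m + 1) : ℝ) / r ^ (m + 1)) * (max 1 Cx) ^ (m + 1) := by
            apply mul_le_mul hy1.le h1 (by positivity) (by positivity)
        _ = Cy * ((Nat.factorial (m + 1) : ℝ) * (max 1 Cx) ^ (m + 1) / r ^ (m + 1)) := by
            ring
    rw [smul_eq_mul, smul_eq_mul, hprod]
    calc FdBcoeff k n (fun i j => (q i j).1) *
          (y (fun j => ∑ i, (q i j).1) * (Cx ^ m * ∏ i : Fin k, ∏ j, x i j ^ (q i j).1))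
        = (y (fun j => ∑ i, (q i j).1) * Cx ^ m) *
            (FdBcoeff k n (fun i j => (q i j).1) * ∏ i : Fin k, ∏ j, x i j ^ (q i j).1) := by
          ring
      _ ≤ (Cy * ((Nat.factorial (m + 1) : ℝ) / (r / max 1 Cx) ^ (m + 1))) *
            (FdBcoeff k n (fun i j => (q i j).1) * ∏ i : Fin k, ∏ j, x i j ^ (q i j).1) := by
          exact mul_le_mul_of_nonneg_right key (by positivity)
      _ = Cy * (FdBcoeff k n (fun i j => (q i j).1) *
            ((Nat.factorial (m + 1) : ℝ) / (r / max 1 Cx) ^ (m + 1) *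
              ∏ i : Fin k, ∏ j, x i j ^ (q i j).1)) := by
          ring
  · simp
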